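/- arXiv:1003.3138 — 3 statements merged into one kernel-verified Lean document; each statement's English description precedes it below -/
import Mathlib

section
/- Let π be an 𝓔-measurable quasi-probability kernel with J_𝓔(π) = J_⋆(π). Then there exists a normal refinement ρ of π. -/
open MeasureTheory
open scoped ENNReal

variable {X : Type*}

/-- A quasi-probability kernel on `(X, mX)`: `π(·,F)` is `mX`-measurable for each
`mX`-measurable `F`, and each `π(x,·)` is a measure with total mass `0` or `1`. -/
def IsQPK (mX : MeasurableSpace X) (π : X → @Measure X mX) : Prop :=
  (∀ F : Set X, MeasurableSet[mX] F → Measurable[mX] fun x => π x F) ∧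
    (∀ x : X, π x Set.univ = 0 ∨ π x Set.univ = 1)

/-- The support `S_π = {x : π(x,X) = 1}` of a quasi-probability kernel. -/
def qpkSupp (mX : MeasurableSpace X) (π : X → @Measure X mX) : Set X :=
  {x | π x Set.univ = 1}

/-- `π` is `𝓔`-measurable: `π(·,F)` is `𝓔`-measurable for each `mX`-measurable `F`. -/
def EMeasK (mX 𝓔 : MeasurableSpace X) (π : X → @Measure X mX) : Prop :=
  ∀ F : Set X, MeasurableSet[mX] F → Measurable[𝓔] fun x => π x F

/-- `J_𝓔(π)`: the set of probability measures `μ` on `(X, mX)` with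
`μ(E ∩ F) = ∫_E π(·,F) dμ` for all `E ∈ 𝓔` and `F ∈ mX`. -/
def J (mX 𝓔 : MeasurableSpace X) (π : X → @Measure X mX) : Set (@Measure X mX) :=
  {μ | IsProbabilityMeasure μ ∧ ∀ E F : Set X, MeasurableSet[𝓔] E → MeasurableSet[mX] F →
      μ (E ∩ F) = ∫⁻ x in E, π x F ∂μ}

/-- `J_⋆(π)`: the set of probability measures `μ` on `(X, mX)` with
`μ(F) = ∫ π(·,F) dμ` for all `F ∈ mX`. -/
def Jstar (mX : MeasurableSpace X) (π : X → @Measure X mX) : Set (@Measure X mX) :=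
  {μ | IsProbabilityMeasure μ ∧ ∀ F : Set X, MeasurableSet[mX] F → μ F = ∫⁻ x, π x F ∂μ}

/-- `π` is proper as an `𝓔`-measurable kernel: `π(x, E ∩ F) = 1_E(x)·π(x,F)` for all
`E ∈ 𝓔`, `F ∈ mX` and `x ∈ X`. -/
def IsProperK (mX 𝓔 : MeasurableSpace X) (π : X → @Measure X mX) : Prop :=
  ∀ E F : Set X, MeasurableSet[𝓔] E → MeasurableSet[mX] F → ∀ x : X,
    π x (E ∩ F) = Set.indicator E (fun _ => π x F) x

/-- `μ` is trivial on `𝓔` if `μ(E) ∈ {0,1}` for every `E ∈ 𝓔`. -/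
def IsTrivialOn (mX 𝓔 : MeasurableSpace X) (μ : @Measure X mX) : Prop :=
  ∀ E : Set X, MeasurableSet[𝓔] E → μ E = 0 ∨ μ E = 1

/-- `π` is adapted if `π(x,·) ∈ J_𝓔(π)` for every `x ∈ S_π`. -/
def IsAdaptedK (mX 𝓔 : MeasurableSpace X) (π : X → @Measure X mX) : Prop :=
  ∀ x ∈ qpkSupp mX π, π x ∈ J mX 𝓔 π

/-- `π` is normal if it is adapted and `π(x,·)` is trivial on `𝓔` for every `x ∈ S_π`. -/
def IsNormalK (mX 𝓔 : MeasurableSpace X) (π : X → @Measure X mX) : Prop :=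
  IsAdaptedK mX 𝓔 π ∧ ∀ x ∈ qpkSupp mX π, IsTrivialOn mX 𝓔 (π x)

/-- The restriction of `π` to `D`: the kernel `ρ(x,F) = 1_D(x)·π(x,F)`. -/
noncomputable def kerRestrict (mX : MeasurableSpace X) (π : X → @Measure X mX) (D : Set X) :
    X → @Measure X mX :=
  Set.indicator D π

/-- `ρ` is a refinement of `π`: an `𝓔`-measurable quasi-probability kernel which is the
restriction of `π` to some `D ∈ 𝓔` and satisfies `J_𝓔(ρ) = J_𝓔(π)`. -/
def IsRefinement (mX 𝓔 : MeasurableSpace X) (π ρ : X → @Measure X mX) : Prop :=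
  IsQPK mX ρ ∧ EMeasK mX 𝓔 ρ ∧ (∃ D : Set X, MeasurableSet[𝓔] D ∧ ρ = kerRestrict mX π D) ∧
    J mX 𝓔 ρ = J mX 𝓔 π

/-- `Δ^π_μ = {x ∈ S_π : π(x,·) = μ}`. -/
def DeltaM (mX : MeasurableSpace X) (π : X → @Measure X mX) (μ : @Measure X mX) : Set X :=
  {x ∈ qpkSupp mX π | π x = μ}

/-- `Δ^π_x = {y ∈ S_π : π(y,·) = π(x,·)}`. -/
def Delta (mX : MeasurableSpace X) (π : X → @Measure X mX) (x : X) : Set X :=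
  {y ∈ qpkSupp mX π | π y = π x}

/-- `𝓝_π`: the σ-algebra of `mX`-measurable sets `N` such that for every `x ∈ S_π` either
`Δ^π_x ⊆ N` or `Δ^π_x ∩ N = ∅`. -/
def NSigma (mX : MeasurableSpace X) (π : X → @Measure X mX) : MeasurableSpace X where
  MeasurableSet' N := MeasurableSet[mX] N ∧
    ∀ x ∈ qpkSupp mX π, Delta mX π x ⊆ N ∨ Delta mX π x ∩ N = ∅
  measurableSet_empty :=
    ⟨@MeasurableSet.empty X mX, fun _ _ => Or.inr (Set.inter_empty _)⟩
  measurableSet_compl := by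
    rintro N ⟨hN, h⟩
    refine ⟨hN.compl, fun x hx => ?_⟩
    rcases h x hx with h1 | h1
    · refine Or.inr ?_
      ext y
      simp only [Set.mem_inter_iff, Set.mem_compl_iff, Set.mem_empty_iff_false, iff_false,
        not_and, not_not]
      exact fun hy => h1 hy
    · exact Or.inl fun y hy hyN => (Set.eq_empty_iff_forall_notMem.1 h1) y ⟨hy, hyN⟩
  measurableSet_iUnion := by
    intro f hf
    refine ⟨MeasurableSet.iUnion fun i => (hf i).1, fun x hx => ?_⟩
    by_cases hc : ∃ i, Delta mX π x ⊆ f i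
    · rcases hc with ⟨i, hi⟩
      exact Or.inl (hi.trans (Set.subset_iUnion f i))
    · push_neg at hc
      refine Or.inr ?_
      ext y
      simp only [Set.mem_inter_iff, Set.mem_iUnion, Set.mem_empty_iff_false, iff_false, not_and]
      rintro hy ⟨i, hyi⟩
      rcases (hf i).2 x hx with h1 | h1
      · exact hc i h1
      · exact (Set.eq_empty_iff_forall_notMem.1 h1) y ⟨hy, hyi⟩

/-- `𝓢_π`: the least σ-algebra making all the functions `π(·,F)`, `F ∈ mX`, measurable,
i.e. the σ-algebra generated by these functions. -/
def Spi (mX : MeasurableSpace X) (π : X → @Measure X mX) : MeasurableSpace X :=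
  ⨆ F ∈ {F : Set X | MeasurableSet[mX] F},
    MeasurableSpace.comap (fun x => π x F) inferInstance

/-! Let `D` be the set of `x ∈ S_π` for which `π(y,·) = π(x,·)` for `π(x,·)`-almost every `y`.
Testing equality of measures on a countable generating π-system, and equality of values on the
rational level sets of the `𝓔`-measurable functions `π(·,s)`, shows `D ∈ 𝓔`. Every
`μ ∈ J_𝓔(π)` is carried by `D`: for `E ∈ 𝓔`, `μ(Eᶜ ∩ E) = 0` forces `π(x,E) = 0` for
`μ`-a.e. `x ∉ E`, so `π(x,·)` almost surely stays on the side of `E` containing `x`.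
For `x ∈ D` the measure `π(x,·)` is invariant under `π`, hence lies in `J_⋆(π) = J_𝓔(π)`, and
then `π(x,E) = ∫_E π(·,E) dπ(x,·) = π(x,E)²` makes it trivial on `𝓔`. So the restriction of `π`
to `D` is a normal refinement. -/

open MeasurableSpace Set

theorem Set.Countable.generatePiSystem {α : Type*} {S : Set (Set α)} (hS : S.Countable) :
    (generatePiSystem S).Countable := by
  refine ((countable_ofPred_finite_subset hS).image sInter).mono fun s hs => ?_
  induction hs with
  | base h => exact ⟨{_}, ⟨finite_singleton _, singleton_subset_iff.2 h⟩, sInter_singleton _⟩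
  | inter _ _ _ ihs iht =>
    obtain ⟨t, ht, rfl⟩ := ihs
    obtain ⟨u, hu, rfl⟩ := iht
    exact ⟨t ∪ u, ⟨ht.1.union hu.1, union_subset ht.2 hu.2⟩, sInter_union _ _⟩

theorem MeasurableSpace.exists_countable_generating_isPiSystem {α : Type*} [m : MeasurableSpace α]
    [CountablyGenerated α] :
    ∃ C : Set (Set α), C.Countable ∧ IsPiSystem C ∧ univ ∈ C ∧ m = generateFrom C := by
  refine ⟨generatePiSystem (insert univ (countableGeneratingSet α)),
    (countable_countableGeneratingSet.insert _).generatePiSystem,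
    isPiSystem_generatePiSystem _, generatePiSystem.base (mem_insert _ _), ?_⟩
  rw [generateFrom_generatePiSystem_eq, generateFrom_insert_univ,
    generateFrom_countableGeneratingSet]

theorem ENNReal.eq_of_forall_rat_lt_iff {a b : ℝ≥0∞}
    (h : ∀ q : ℚ, (Real.toNNReal q : ℝ≥0∞) < a ↔ (Real.toNNReal q : ℝ≥0∞) < b) : a = b := by
  refine le_antisymm (not_lt.1 fun hba => ?_) (not_lt.1 fun hab => ?_)
  · obtain ⟨q, -, hbq, hqa⟩ := ENNReal.lt_iff_exists_rat_btwn.1 hba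
    exact lt_asymm hbq ((h q).1 hqa)
  · obtain ⟨q, -, haq, hqb⟩ := ENNReal.lt_iff_exists_rat_btwn.1 hab
    exact lt_asymm haq ((h q).2 hqb)

theorem MeasureTheory.ae_eq_const_iff_forall_rat {α : Type*} [MeasurableSpace α] {ν : Measure α}
    {f : α → ℝ≥0∞} {c : ℝ≥0∞} :
    (∀ᵐ y ∂ν, f y = c) ↔
      ∀ q : ℚ, ∀ᵐ y ∂ν, (Real.toNNReal q : ℝ≥0∞) < f y ↔ (Real.toNNReal q : ℝ≥0∞) < c := by
  rw [← ae_all_iff]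
  exact ⟨fun h => h.mono fun y hy q => hy ▸ Iff.rfl,
    fun h => h.mono fun y hy => ENNReal.eq_of_forall_rat_lt_iff hy⟩

section Kernel

variable {𝓔 : MeasurableSpace X} [mX : MeasurableSpace X] {π : X → Measure X}

theorem measurableSet_qpkSupp (hπE : EMeasK mX 𝓔 π) : MeasurableSet[𝓔] (qpkSupp mX π) :=
  hπE univ MeasurableSet.univ (measurableSet_singleton 1)

theorem measurableSet_setOf_ae_mem_iff (h𝓔 : 𝓔 ≤ mX) (hπE : EMeasK mX 𝓔 π) {E : Set X}
    (hE : MeasurableSet[𝓔] E) : MeasurableSet[𝓔] {x | ∀ᵐ y ∂π x, y ∈ E ↔ x ∈ E} := by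
  have hsplit : {x | ∀ᵐ y ∂π x, y ∈ E ↔ x ∈ E} =
      E ∩ {x | π x Eᶜ = 0} ∪ Eᶜ ∩ {x | π x E = 0} := by
    ext x
    by_cases hx : x ∈ E <;> simp [hx, ae_iff, compl_def]
  rw [hsplit]
  exact (hE.inter (hπE _ (h𝓔 _ hE.compl) (measurableSet_singleton 0))).union
    (hE.compl.inter (hπE _ (h𝓔 _ hE) (measurableSet_singleton 0)))

theorem measurableSet_setOf_ae_eq_apply (h𝓔 : 𝓔 ≤ mX) (hπE : EMeasK mX 𝓔 π) {f : X → ℝ≥0∞}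
    (hf : Measurable[𝓔] f) : MeasurableSet[𝓔] {x | ∀ᵐ y ∂π x, f y = f x} := by
  have hlevel : {x | ∀ᵐ y ∂π x, f y = f x} = ⋂ q : ℚ,
      {x | ∀ᵐ y ∂π x, y ∈ {z | (Real.toNNReal q : ℝ≥0∞) < f z} ↔
        x ∈ {z | (Real.toNNReal q : ℝ≥0∞) < f z}} := by
    ext x
    rw [mem_iInter]
    exact ae_eq_const_iff_forall_rat
  rw [hlevel]
  exact .iInter fun q => measurableSet_setOf_ae_mem_iff h𝓔 hπE (measurableSet_lt measurable_const hf)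

section MemJ

variable (h𝓔 : 𝓔 ≤ mX) (hπE : EMeasK mX 𝓔 π) {μ : Measure X} (hμ : μ ∈ J mX 𝓔 π)
include h𝓔 hπE hμ

theorem ae_measure_eq_zero_of_notMem_of_mem_J {E : Set X} (hE : MeasurableSet[𝓔] E) :
    ∀ᵐ x ∂μ, x ∉ E → π x E = 0 := by
  have hEm := h𝓔 E hE
  have hzero : ∫⁻ x in Eᶜ, π x E ∂μ = 0 := by
    rw [← hμ.2 Eᶜ E hE.compl hEm, compl_inter_self, measure_empty]
  exact (setLIntegral_eq_zero_iff hEm.compl ((hπE E hEm).mono h𝓔 le_rfl)).1 hzero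

theorem ae_ae_mem_iff_of_mem_J {E : Set X} (hE : MeasurableSet[𝓔] E) :
    ∀ᵐ x ∂μ, ∀ᵐ y ∂π x, y ∈ E ↔ x ∈ E := by
  filter_upwards [ae_measure_eq_zero_of_notMem_of_mem_J h𝓔 hπE hμ hE,
    ae_measure_eq_zero_of_notMem_of_mem_J h𝓔 hπE hμ hE.compl] with x hE0 hEc0
  by_cases hx : x ∈ E
  · simp only [hx, iff_true, ae_iff]
    exact hEc0 (not_not.2 hx)
  · simp only [hx, iff_false, not_not, ae_iff]
    exact hE0 hx

theorem ae_ae_eq_apply_of_mem_J {f : X → ℝ≥0∞} (hf : Measurable[𝓔] f) :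
    ∀ᵐ x ∂μ, ∀ᵐ y ∂π x, f y = f x := by
  filter_upwards [ae_all_iff.2 fun q : ℚ => ae_ae_mem_iff_of_mem_J h𝓔 hπE hμ
    (measurableSet_lt measurable_const hf : MeasurableSet[𝓔] {z | (Real.toNNReal q : ℝ≥0∞) < f z})]
    with x hx
  exact ae_eq_const_iff_forall_rat.2 hx

omit h𝓔 in
theorem ae_mem_qpkSupp_of_mem_J (hπ : IsQPK mX π) : ∀ᵐ x ∂μ, x ∈ qpkSupp mX π := by
  have hmass := hμ.2 _ univ (measurableSet_qpkSupp hπE).compl MeasurableSet.univ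
  rw [inter_univ] at hmass
  have hSm : MeasurableSet (qpkSupp mX π) :=
    hπ.1 univ MeasurableSet.univ (measurableSet_singleton 1)
  exact ae_iff.2 <| hmass.trans <| (setLIntegral_eq_zero_iff hSm.compl (hπ.1 univ .univ)).2 <|
    ae_of_all _ fun x hx => (hπ.2 x).resolve_right hx

end MemJ

theorem mem_Jstar_of_ae_eq {ν : Measure X} [IsProbabilityMeasure ν] (h : ∀ᵐ y ∂ν, π y = ν) :
    ν ∈ Jstar mX π := by
  refine ⟨inferInstance, fun F _ => ?_⟩
  rw [lintegral_congr_ae (h.mono fun y hy => by rw [hy]), lintegral_const, measure_univ, mul_one]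

theorem isTrivialOn_of_mem_J_of_ae_eq (h𝓔 : 𝓔 ≤ mX) {ν : Measure X} (hν : ν ∈ J mX 𝓔 π)
    (h : ∀ᵐ y ∂ν, π y = ν) : IsTrivialOn mX 𝓔 ν := by
  intro E hE
  have := hν.1
  have hsq : ν E * ν E = ν E := by
    have := hν.2 E E hE (h𝓔 E hE)
    rw [inter_self, lintegral_congr_ae (ae_restrict_of_ae (h.mono fun y hy => by rw [hy])),
      setLIntegral_const] at this
    exact this.symm
  rcases eq_or_ne (ν E) 0 with h0 | h0
  · exact Or.inl h0
  · exact Or.inr ((ENNReal.mul_eq_left h0 (measure_ne_top ν E)).1 hsq)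

theorem kerRestrict_apply (D : Set X) (x : X) (F : Set X) :
    kerRestrict mX π D x F = D.indicator (fun y => π y F) x := by
  by_cases hx : x ∈ D <;> simp [kerRestrict, hx]

theorem kerRestrict_of_mem {D : Set X} {x : X} (hx : x ∈ D) : kerRestrict mX π D x = π x :=
  indicator_of_mem hx π

theorem qpkSupp_kerRestrict (D : Set X) :
    qpkSupp mX (kerRestrict mX π D) = D ∩ qpkSupp mX π := by
  ext x
  by_cases hx : x ∈ D <;> simp [qpkSupp, kerRestrict_apply, hx]

theorem isQPK_kerRestrict (hπ : IsQPK mX π) {D : Set X} (hD : MeasurableSet D) :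
    IsQPK mX (kerRestrict mX π D) := by
  refine ⟨fun F hF => ?_, fun x => ?_⟩
  · simp_rw [kerRestrict_apply]
    exact (hπ.1 F hF).indicator hD
  · by_cases hx : x ∈ D
    · rw [kerRestrict_apply, indicator_of_mem hx]
      exact hπ.2 x
    · simp [kerRestrict_apply, hx]

theorem eMeasK_kerRestrict (hπE : EMeasK mX 𝓔 π) {D : Set X} (hD : MeasurableSet[𝓔] D) :
    EMeasK mX 𝓔 (kerRestrict mX π D) := fun F hF => by
  simp_rw [kerRestrict_apply]
  exact (hπE F hF).indicator hD

theorem mem_J_kerRestrict_iff {D : Set X} {μ : Measure X} (hD : μ Dᶜ = 0) :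
    μ ∈ J mX 𝓔 (kerRestrict mX π D) ↔ μ ∈ J mX 𝓔 π := by
  have hint : ∀ E F : Set X, ∫⁻ x in E, kerRestrict mX π D x F ∂μ = ∫⁻ x in E, π x F ∂μ :=
    fun E F => lintegral_congr_ae <| ae_restrict_of_ae <|
      (ae_iff.2 hD : ∀ᵐ x ∂μ, x ∈ D).mono fun x hx => by simp only [kerRestrict_of_mem hx]
  simp only [J, mem_ofPred_eq, hint]

theorem J_kerRestrict (hπ : IsQPK mX π) (hπE : EMeasK mX 𝓔 π) (h𝓔 : 𝓔 ≤ mX) {D : Set X}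
    (hD : MeasurableSet[𝓔] D) (hconull : ∀ μ ∈ J mX 𝓔 π, μ Dᶜ = 0) :
    J mX 𝓔 (kerRestrict mX π D) = J mX 𝓔 π := by
  ext μ
  refine ⟨fun hμ => ?_, fun hμ => (mem_J_kerRestrict_iff (hconull μ hμ)).2 hμ⟩
  have hsupp := ae_mem_qpkSupp_of_mem_J (eMeasK_kerRestrict hπE hD) hμ
    (isQPK_kerRestrict hπ (h𝓔 D hD))
  rw [qpkSupp_kerRestrict] at hsupp
  exact (mem_J_kerRestrict_iff (ae_iff.1 (hsupp.mono fun x hx => hx.1))).1 hμ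

theorem isRefinement_kerRestrict (hπ : IsQPK mX π) (hπE : EMeasK mX 𝓔 π) (h𝓔 : 𝓔 ≤ mX)
    {D : Set X} (hD : MeasurableSet[𝓔] D) (hconull : ∀ μ ∈ J mX 𝓔 π, μ Dᶜ = 0) :
    IsRefinement mX 𝓔 π (kerRestrict mX π D) :=
  ⟨isQPK_kerRestrict hπ (h𝓔 D hD), eMeasK_kerRestrict hπE hD, ⟨D, hD, rfl⟩,
    J_kerRestrict hπ hπE h𝓔 hD hconull⟩

theorem isNormalK_kerRestrict {D : Set X} (hJ : J mX 𝓔 (kerRestrict mX π D) = J mX 𝓔 π)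
    (hD : ∀ x ∈ D ∩ qpkSupp mX π, π x ∈ J mX 𝓔 π ∧ IsTrivialOn mX 𝓔 (π x)) :
    IsNormalK mX 𝓔 (kerRestrict mX π D) := by
  refine ⟨fun x hx => ?_, fun x hx => ?_⟩ <;> rw [qpkSupp_kerRestrict] at hx <;>
    rw [kerRestrict_of_mem hx.1]
  · exact hJ ▸ (hD x hx).1
  · exact (hD x hx).2

end Kernel

/-- if `J_𝓔(π) = J_⋆(π)` then there exists a normal refinement of `π`. -/
theorem stmt8 (mX : MeasurableSpace X) (hCG : @MeasurableSpace.CountablyGenerated X mX)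
    (𝓔 : MeasurableSpace X) (h𝓔 : 𝓔 ≤ mX)
    (π : X → @Measure X mX) (hπ : IsQPK mX π) (hπE : EMeasK mX 𝓔 π)
    (hJ : J mX 𝓔 π = Jstar mX π) :
    ∃ ρ : X → @Measure X mX, IsRefinement mX 𝓔 π ρ ∧ IsNormalK mX 𝓔 ρ := by
  -- make `mX`, not `𝓔`, the ambient instance
  let _ := mX
  obtain ⟨C, hCc, hCpi, hCuniv, hCgen⟩ := @exists_countable_generating_isPiSystem X mX hCG
  have hCm : ∀ s ∈ C, MeasurableSet[mX] s := fun s hs => hCgen ▸ measurableSet_generateFrom hs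
  set D := qpkSupp mX π ∩ ⋂ s ∈ C, {x | ∀ᵐ y ∂π x, π y s = π x s}
  have hD : MeasurableSet[𝓔] D := (measurableSet_qpkSupp hπE).inter <|
    .biInter hCc fun s hs => measurableSet_setOf_ae_eq_apply h𝓔 hπE (hπE s (hCm s hs))
  have hconull : ∀ μ ∈ J mX 𝓔 π, μ Dᶜ = 0 := fun μ hμ => ae_iff.1 <| by
    filter_upwards [ae_mem_qpkSupp_of_mem_J hπE hμ hπ, (ae_ball_iff hCc).2 fun s hs =>
      ae_ae_eq_apply_of_mem_J h𝓔 hπE hμ (hπE s (hCm s hs))] with x hxS hxC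
    exact ⟨hxS, mem_iInter₂.2 hxC⟩
  have hinvariant : ∀ x ∈ D, ∀ᵐ y ∂π x, π y = π x := by
    rintro x ⟨hxS, hxC⟩
    have hagree : ∀ s ∈ C, ∀ᵐ y ∂π x, π y s = π x s := fun s hs => mem_iInter₂.1 hxC s hs
    filter_upwards [(ae_ball_iff hCc).2 hagree] with y hy
    have : IsFiniteMeasure (π y) := ⟨by rw [hy univ hCuniv, hxS]; exact ENNReal.one_lt_top⟩
    exact ext_of_generate_finite C hCgen hCpi hy (hy univ hCuniv)
  refine ⟨_, isRefinement_kerRestrict hπ hπE h𝓔 hD hconull,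
    isNormalK_kerRestrict (J_kerRestrict hπ hπE h𝓔 hD hconull) fun x hx => ?_⟩
  have : IsProbabilityMeasure (π x) := ⟨hx.2⟩
  have hxJ : π x ∈ J mX 𝓔 π := hJ ▸ mem_Jstar_of_ae_eq (hinvariant x hx.1)
  exact ⟨hxJ, isTrivialOn_of_mem_J_of_ae_eq h𝓔 hxJ (hinvariant x hx.1)⟩
end

section
/- Let π be an 𝓔-measurable quasi-probability kernel. Then π is proper as an 𝓝_π-measurable kernel (i.e. π(x, N ∩ F) = 1_N(x)·π(x,F) for all N ∈ 𝓝_π, F ∈ 𝓕 and x ∈ X) if and only if π(x, Δ^π_x) = 1 for every x ∈ S_π. -/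
open MeasureTheory
open scoped ENNReal

variable {X : Type*}

/-!
A probability measure on a countably generated σ-algebra is pinned down by its values on a
countable π-system, so each level set `Δ^π_x` of the kernel is a countable intersection of level
sets of the measurable maps `π(·,F)`, hence lies in `𝓝_π`. Properness tested on `N = Δ^π_x`,
`F = X` gives `π(x, Δ^π_x) = 1`; conversely, if `π(x,·)` is carried by `Δ^π_x`, then every
`N ∈ 𝓝_π` either contains this carrier or misses it.
-/

theorem MeasurableSpace.exists_countable_isPiSystem_generateFrom_eq {α : Type*}
    [m : MeasurableSpace α] [CountablyGenerated α] :
    ∃ T : Set (Set α), T.Countable ∧ IsPiSystem T ∧ generateFrom T = m := by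
  obtain ⟨S, hSc, rfl⟩ := CountablyGenerated.isCountablyGenerated (α := α)
  refine ⟨Set.sInter '' {t | t.Finite ∧ t ⊆ S}, (Set.countable_ofPred_finite_subset hSc).image _,
    ?_, le_antisymm ?_ ?_⟩
  · rintro _ ⟨t, ⟨htf, htS⟩, rfl⟩ _ ⟨u, ⟨huf, huS⟩, rfl⟩ -
    exact ⟨t ∪ u, ⟨htf.union huf, Set.union_subset htS huS⟩, Set.sInter_union t u⟩
  · refine generateFrom_le ?_
    rintro _ ⟨t, ⟨htf, htS⟩, rfl⟩
    exact htf.measurableSet_sInter fun s hs => measurableSet_generateFrom (htS hs)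
  · exact generateFrom_mono fun s hs =>
      ⟨{s}, ⟨Set.finite_singleton s, Set.singleton_subset_iff.2 hs⟩, Set.sInter_singleton s⟩

theorem MeasureTheory.Measure.measurableSet_setOf_eq {α β : Type*} [MeasurableSpace α]
    [MeasurableSpace.CountablyGenerated α] [MeasurableSpace β] {κ : β → Measure α}
    (hκ : Measurable κ) (μ : Measure α) [IsFiniteMeasure μ] :
    MeasurableSet {b | κ b = μ} := by
  obtain ⟨T, hTc, hT, hgen⟩ := MeasurableSpace.exists_countable_isPiSystem_generateFrom_eq (α := α)
  have hTmeas : ∀ F ∈ T, MeasurableSet F := fun F hF =>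
    hgen ▸ MeasurableSpace.measurableSet_generateFrom hF
  have hlevel : {b | κ b = μ} = {b | κ b Set.univ = μ Set.univ} ∩ ⋂ F ∈ T, {b | κ b F = μ F} := by
    ext b
    simp only [Set.mem_ofPred_eq, Set.mem_inter_iff, Set.mem_iInter]
    refine ⟨fun h => ⟨by rw [h], fun F _ => by rw [h]⟩, fun ⟨huniv, hF⟩ => ?_⟩
    have : IsFiniteMeasure (κ b) := ⟨huniv ▸ measure_lt_top μ _⟩
    exact ext_of_generate_finite T hgen.symm hT hF huniv
  rw [hlevel]
  exact ((measurable_coe MeasurableSet.univ).comp hκ (measurableSet_singleton _)).inter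
    (.biInter hTc fun F hF => (measurable_coe (hTmeas F hF)).comp hκ (measurableSet_singleton _))

section QuasiProbabilityKernel

variable [mX : MeasurableSpace X] {π : X → Measure X}

theorem isProbabilityMeasure_of_mem_qpkSupp {x : X} (hx : x ∈ qpkSupp mX π) :
    IsProbabilityMeasure (π x) :=
  ⟨hx⟩

theorem Delta_eq_setOf_eq {x : X} (hx : x ∈ qpkSupp mX π) :
    Delta mX π x = {y | π y = π x} :=
  Set.ext fun _ => ⟨And.right, fun hy => ⟨(congrFun (congrArg DFunLike.coe hy) _).trans hx, hy⟩⟩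

theorem measurableSet_Delta [MeasurableSpace.CountablyGenerated X] (hπ : IsQPK mX π) {x : X}
    (hx : x ∈ qpkSupp mX π) : MeasurableSet (Delta mX π x) := by
  have := isProbabilityMeasure_of_mem_qpkSupp hx
  rw [Delta_eq_setOf_eq hx]
  exact Measure.measurableSet_setOf_eq (Measure.measurable_of_measurable_coe π hπ.1) (π x)

theorem measurableSet_NSigma_Delta [MeasurableSpace.CountablyGenerated X] (hπ : IsQPK mX π)
    {x : X} (hx : x ∈ qpkSupp mX π) : MeasurableSet[NSigma mX π] (Delta mX π x) := by
  refine ⟨measurableSet_Delta hπ hx, fun y _ => ?_⟩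
  by_cases h : π y = π x
  · exact Or.inl fun z hz => ⟨hz.1, hz.2.trans h⟩
  · exact Or.inr (Set.eq_empty_iff_forall_notMem.2 fun z hz => h (hz.1.2.symm.trans hz.2.2))

theorem isProperK_NSigma_of_measure_Delta_eq_one (hπ : IsQPK mX π)
    (hΔ : ∀ x ∈ qpkSupp mX π, π x (Delta mX π x) = 1) : IsProperK mX (NSigma mX π) π := by
  intro N F hN _ x
  by_cases hx : x ∈ qpkSupp mX π
  · have := isProbabilityMeasure_of_mem_qpkSupp hx
    have hxΔ : x ∈ Delta mX π x := ⟨hx, rfl⟩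
    rcases hN.2 x hx with hΔN | hΔN
    · have hNc : π x Nᶜ = 0 :=
        (prob_compl_eq_zero_iff hN.1).2 (one_le_prob_iff.1 (hΔ x hx ▸ measure_mono hΔN))
      rw [Set.indicator_of_mem (hΔN hxΔ), Set.inter_comm, measure_inter_conull hNc]
    · have hΔNc : Delta mX π x ⊆ Nᶜ :=
        Set.subset_compl_iff_disjoint_right.2 (Set.disjoint_iff_inter_eq_empty.2 hΔN)
      have hN : π x N = 0 :=
        (prob_compl_eq_one_iff hN.1).1 (one_le_prob_iff.1 (hΔ x hx ▸ measure_mono hΔNc))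
      rw [Set.indicator_of_notMem (hΔNc hxΔ), measure_mono_null Set.inter_subset_left hN]
  · have h0 : π x = 0 := Measure.measure_univ_eq_zero.1 ((hπ.2 x).resolve_right hx)
    by_cases hxN : x ∈ N <;> simp [h0, hxN]

theorem measure_Delta_eq_one_of_isProperK [MeasurableSpace.CountablyGenerated X]
    (hπ : IsQPK mX π) (hp : IsProperK mX (NSigma mX π) π) {x : X} (hx : x ∈ qpkSupp mX π) :
    π x (Delta mX π x) = 1 := by
  have h := hp _ Set.univ (measurableSet_NSigma_Delta hπ hx) MeasurableSet.univ x
  rw [Set.inter_univ, Set.indicator_of_mem (show x ∈ Delta mX π x from ⟨hx, rfl⟩)] at h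
  exact h.trans hx

end QuasiProbabilityKernel

theorem stmt12_general (mX : MeasurableSpace X) (hCG : @MeasurableSpace.CountablyGenerated X mX)
    (π : X → @Measure X mX) (hπ : IsQPK mX π) :
    IsProperK mX (NSigma mX π) π ↔ ∀ x ∈ qpkSupp mX π, π x (Delta mX π x) = 1 :=
  ⟨fun hp _ hx => measure_Delta_eq_one_of_isProperK hπ hp hx,
    isProperK_NSigma_of_measure_Delta_eq_one hπ⟩

/-- `π` is proper as an `𝓝_π`-measurable kernel iff `π(x, Δ^π_x) = 1` for
every `x ∈ S_π`. -/
theorem stmt12 (mX : MeasurableSpace X) (hCG : @MeasurableSpace.CountablyGenerated X mX)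
    (𝓔 : MeasurableSpace X) (h𝓔 : 𝓔 ≤ mX)
    (π : X → @Measure X mX) (hπ : IsQPK mX π) (hπE : EMeasK mX 𝓔 π) :
    IsProperK mX (NSigma mX π) π ↔ ∀ x ∈ qpkSupp mX π, π x (Delta mX π x) = 1 :=
  stmt12_general mX hCG π hπ
end

section
/- Let π be an 𝓔-measurable quasi-probability kernel and μ ∈ J_𝓔(π). Then μ is an extreme point of the convex set J_𝓔(π) (i.e. whenever μ = a·μ₁ + (1−a)·μ₂ with μ₁, μ₂ ∈ J_𝓔(π) and 0 < a < 1, then μ₁ = μ₂ = μ) if and only if μ is trivial on 𝓔. -/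
open MeasureTheory
open scoped ENNReal

variable {X : Type*}

/-! A decomposition `μ = a • μ₁ + (1 - a) • μ₂` inside `J_𝓔(π)` forces `μᵢ ≪ μ`. If `μ` is
trivial on `𝓔`, absolute continuity pins `μᵢ` down on `𝓔`, and since every `π(·,F)` is
`𝓔`-measurable, `μᵢ(F) = ∫ π(·,F) dμᵢ` then pins it down everywhere. Conversely, a set `E ∈ 𝓔`
with `0 < μ(E) < 1` splits `μ` into its conditional measures on `E` and `Eᶜ`, which stay in
`J_𝓔(π)` because `E ∩ E' ∈ 𝓔` for `E' ∈ 𝓔`. -/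

open ProbabilityTheory

section Extremality

-- `mX` comes after `𝓔` so that instance search prefers it
variable {𝓔 : MeasurableSpace X} [mX : MeasurableSpace X] {π : X → Measure X} {μ ν : Measure X}

lemma J_subset_Jstar : J mX 𝓔 π ⊆ Jstar mX π := fun μ hμ =>
  ⟨hμ.1, fun F hF => by simpa using hμ.2 Set.univ F MeasurableSet.univ hF⟩

lemma eq_of_mem_Jstar_of_eq_on (h𝓔 : 𝓔 ≤ mX) (hπE : EMeasK mX 𝓔 π)
    (hμ : μ ∈ Jstar mX π) (hν : ν ∈ Jstar mX π)
    (heq : ∀ E, MeasurableSet[𝓔] E → ν E = μ E) : ν = μ := by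
  have htrim : ν.trim h𝓔 = μ.trim h𝓔 := @Measure.ext X 𝓔 _ _ fun E hE => by
    rw [trim_measurableSet_eq h𝓔 hE, trim_measurableSet_eq h𝓔 hE, heq E hE]
  ext F hF
  rw [hν.2 F hF, hμ.2 F hF, ← lintegral_trim h𝓔 (hπE F hF), ← lintegral_trim h𝓔 (hπE F hF),
    htrim]

lemma IsTrivialOn.apply_eq_of_absolutelyContinuous [IsProbabilityMeasure μ]
    [IsProbabilityMeasure ν] (h𝓔 : 𝓔 ≤ mX) (htriv : IsTrivialOn mX 𝓔 μ) (hνμ : ν ≪ μ)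
    {E : Set X} (hE : MeasurableSet[𝓔] E) : ν E = μ E := by
  rcases htriv E hE with h0 | h1
  · rw [h0, hνμ h0]
  · have hνc : ν Eᶜ = 0 := hνμ ((prob_compl_eq_zero_iff (h𝓔 E hE)).2 h1)
    rw [h1, ← prob_compl_eq_zero_iff (h𝓔 E hE), hνc]

lemma IsTrivialOn.eq_of_mem_J_of_absolutelyContinuous (h𝓔 : 𝓔 ≤ mX) (hπE : EMeasK mX 𝓔 π)
    (hμ : μ ∈ J mX 𝓔 π) (htriv : IsTrivialOn mX 𝓔 μ) (hν : ν ∈ J mX 𝓔 π) (hνμ : ν ≪ μ) :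
    ν = μ :=
  have := hμ.1
  have := hν.1
  eq_of_mem_Jstar_of_eq_on h𝓔 hπE (J_subset_Jstar hμ) (J_subset_Jstar hν)
    fun _ hE => htriv.apply_eq_of_absolutelyContinuous h𝓔 hνμ hE

lemma cond_mem_J (h𝓔 : 𝓔 ≤ mX) (hμ : μ ∈ J mX 𝓔 π) {E : Set X} (hE : MeasurableSet[𝓔] E)
    (hμE : μ E ≠ 0) : μ[|E] ∈ J mX 𝓔 π := by
  have := hμ.1
  refine ⟨cond_isProbabilityMeasure hμE, fun E' F hE' hF => ?_⟩
  rw [cond_apply (h𝓔 E hE), ← Set.inter_assoc, hμ.2 _ F (hE.inter hE') hF,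
    ProbabilityTheory.cond, Measure.restrict_smul, lintegral_smul_measure, Measure.restrict_restrict (h𝓔 E' hE'),
    Set.inter_comm, smul_eq_mul]

lemma smul_cond_eq_restrict [IsFiniteMeasure μ] (E : Set X) : μ E • μ[|E] = μ.restrict E := by
  by_cases hμE : μ E = 0
  · simp [hμE, Measure.restrict_eq_zero.2 hμE]
  · rw [ProbabilityTheory.cond, smul_smul, ENNReal.mul_inv_cancel hμE (measure_ne_top μ E),
      one_smul]

lemma eq_smul_cond_add_smul_cond_compl [IsProbabilityMeasure μ] {E : Set X}
    (hE : MeasurableSet E) : μ = μ E • μ[|E] + (1 - μ E) • μ[|Eᶜ] := by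
  rw [← prob_compl_eq_one_sub hE, smul_cond_eq_restrict, smul_cond_eq_restrict,
    Measure.restrict_add_restrict_compl hE]

end Extremality

theorem stmt14_general (mX : MeasurableSpace X)
    (𝓔 : MeasurableSpace X) (h𝓔 : 𝓔 ≤ mX)
    (π : X → @Measure X mX) (hπE : EMeasK mX 𝓔 π)
    (μ : @Measure X mX) (hμ : μ ∈ J mX 𝓔 π) :
    (∀ (a : ℝ≥0∞) (μ₁ μ₂ : @Measure X mX), μ₁ ∈ J mX 𝓔 π → μ₂ ∈ J mX 𝓔 π →
        0 < a → a < 1 → μ = a • μ₁ + (1 - a) • μ₂ → μ₁ = μ ∧ μ₂ = μ) ↔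
      IsTrivialOn mX 𝓔 μ := by
  -- `𝓔` is a local instance too; instance search must find `mX`
  let _ : MeasurableSpace X := mX
  have := hμ.1
  constructor
  · intro hext E hE
    by_contra! hμE
    have hμE_lt : μ E < 1 := lt_of_le_of_ne prob_le_one hμE.2
    have hμEc : μ Eᶜ ≠ 0 := by
      rw [prob_compl_eq_one_sub (h𝓔 E hE)]
      exact (tsub_pos_of_lt hμE_lt).ne'
    have hcond := (hext (μ E) μ[|E] μ[|Eᶜ] (cond_mem_J h𝓔 hμ hE hμE.1)
      (cond_mem_J h𝓔 hμ hE.compl hμEc) (pos_iff_ne_zero.2 hμE.1) hμE_lt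
      (eq_smul_cond_add_smul_cond_compl (h𝓔 E hE))).1
    exact hμE.2 (hcond ▸ cond_apply_self hμE.1 (measure_ne_top μ E))
  · intro htriv a μ₁ μ₂ hμ₁ hμ₂ ha0 ha1 hdec
    have hμ₁μ : μ₁ ≪ μ := hdec ▸ (Measure.absolutelyContinuous_smul ha0.ne').add_right _
    have hμ₂μ : μ₂ ≪ μ :=
      hdec ▸ (Measure.absolutelyContinuous_smul (tsub_pos_of_lt ha1).ne').add_right' _
    exact ⟨htriv.eq_of_mem_J_of_absolutelyContinuous h𝓔 hπE hμ hμ₁ hμ₁μ,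
      htriv.eq_of_mem_J_of_absolutelyContinuous h𝓔 hπE hμ hμ₂ hμ₂μ⟩

/-- `μ ∈ J_𝓔(π)` is an extreme point of the convex set `J_𝓔(π)` iff `μ` is
trivial on `𝓔`. -/
theorem stmt14 (mX : MeasurableSpace X) (hCG : @MeasurableSpace.CountablyGenerated X mX)
    (𝓔 : MeasurableSpace X) (h𝓔 : 𝓔 ≤ mX)
    (π : X → @Measure X mX) (hπ : IsQPK mX π) (hπE : EMeasK mX 𝓔 π)
    (μ : @Measure X mX) (hμ : μ ∈ J mX 𝓔 π) :
    (∀ (a : ℝ≥0∞) (μ₁ μ₂ : @Measure X mX), μ₁ ∈ J mX 𝓔 π → μ₂ ∈ J mX 𝓔 π →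
        0 < a → a < 1 → μ = a • μ₁ + (1 - a) • μ₂ → μ₁ = μ ∧ μ₂ = μ) ↔
      IsTrivialOn mX 𝓔 μ :=
  stmt14_general mX 𝓔 h𝓔 π hπE μ hμ
end
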